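/- Let γ: ℝ → ℝ be three times differentiable and satisfy the Chazy equation γ''' = 6γγ'' − 9(γ')². Define F(v1,v2,v3) = (1/2)v1²v3 + (1/2)v1·v2² − (v2⁴/16)·γ(v3) on ℝ³, and let η = [[0,0,1],[0,1,0],[1,0,0]]. Then F satisfies the WDVV associativity equations: for all α,β,γ,δ ∈ {1,2,3}, ∑_{ρ,σ} F_{αβρ} η^{ρσ} F_{σγδ} = ∑_{ρ,σ} F_{δβρ} η^{ρσ} F_{σγα}. -/

import Mathlib

/-!
With coordinates indexed from `0`, the third derivatives `F₀ⱼₖ = ηⱼₖ` are constant and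
all others come from the term `f = -(v₁⁴/16) γ(v₂)`. For a tensor of this normal form the WDVV
system collapses to the single equation `f₂₂₂ = f₁₁₂² - f₁₁₁ f₁₂₂`, which for this `f` is
`v₁⁴/16` times the Chazy equation.
-/

/-- Partial derivative of a function of three real variables along coordinate `i`. -/
noncomputable def pd (i : Fin 3) (f : (Fin 3 → ℝ) → ℝ) (x : Fin 3 → ℝ) : ℝ :=
  deriv (fun t => f (Function.update x i t)) (x i)

open Function

def DifferentiableAlong (i : Fin 3) (f : (Fin 3 → ℝ) → ℝ) : Prop :=
  ∀ x, DifferentiableAt ℝ (fun t => f (update x i t)) (x i)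

theorem DifferentiableAlong.add {i : Fin 3} {f g : (Fin 3 → ℝ) → ℝ}
    (hf : DifferentiableAlong i f) (hg : DifferentiableAlong i g) :
    DifferentiableAlong i (f + g) :=
  fun x => (hf x).add (hg x)

theorem pd_add {i : Fin 3} {f g : (Fin 3 → ℝ) → ℝ} (hf : DifferentiableAlong i f)
    (hg : DifferentiableAlong i g) : pd i (f + g) = pd i f + pd i g :=
  funext fun x => deriv_add (hf x) (hg x)

def monomialTerm (c : ℝ) (a b : ℕ) (h : ℝ → ℝ) (v : Fin 3 → ℝ) : ℝ :=
  c * v 0 ^ a * v 1 ^ b * h (v 2)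

section monomialTerm

variable (c : ℝ) (a b : ℕ) {h : ℝ → ℝ} (x : Fin 3 → ℝ)

theorem hasDerivAt_monomialTerm_update_zero :
    HasDerivAt (fun t => monomialTerm c a b h (update x 0 t))
      (monomialTerm (c * a) (a - 1) b h x) (x 0) := by
  simp only [monomialTerm, update_self, update_of_ne, ne_eq, Fin.reduceEq, not_false_eq_true]
  exact ((((hasDerivAt_pow a (x 0)).const_mul c).mul_const (x 1 ^ b)).mul_const
    (h (x 2))).congr_deriv (by ring)

theorem hasDerivAt_monomialTerm_update_one :
    HasDerivAt (fun t => monomialTerm c a b h (update x 1 t))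
      (monomialTerm (c * b) a (b - 1) h x) (x 1) := by
  simp only [monomialTerm, update_self, update_of_ne, ne_eq, Fin.reduceEq, not_false_eq_true]
  exact (((hasDerivAt_pow b (x 1)).const_mul (c * x 0 ^ a)).mul_const
    (h (x 2))).congr_deriv (by ring)

theorem hasDerivAt_monomialTerm_update_two (hh : DifferentiableAt ℝ h (x 2)) :
    HasDerivAt (fun t => monomialTerm c a b h (update x 2 t))
      (monomialTerm c a b (deriv h) x) (x 2) := by
  simp only [monomialTerm, update_self, update_of_ne, ne_eq, Fin.reduceEq, not_false_eq_true]
  exact hh.hasDerivAt.const_mul (c * x 0 ^ a * x 1 ^ b)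

theorem pd_zero_monomialTerm :
    pd 0 (monomialTerm c a b h) = monomialTerm (c * a) (a - 1) b h :=
  funext fun x => (hasDerivAt_monomialTerm_update_zero c a b x).deriv

theorem pd_one_monomialTerm :
    pd 1 (monomialTerm c a b h) = monomialTerm (c * b) a (b - 1) h :=
  funext fun x => (hasDerivAt_monomialTerm_update_one c a b x).deriv

theorem pd_two_monomialTerm (hh : Differentiable ℝ h) :
    pd 2 (monomialTerm c a b h) = monomialTerm c a b (deriv h) :=
  funext fun x => (hasDerivAt_monomialTerm_update_two c a b x hh.differentiableAt).deriv

theorem differentiableAlong_monomialTerm (hh : Differentiable ℝ h) (i : Fin 3) :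
    DifferentiableAlong i (monomialTerm c a b h) := by
  intro x
  fin_cases i
  · exact (hasDerivAt_monomialTerm_update_zero c a b x).differentiableAt
  · exact (hasDerivAt_monomialTerm_update_one c a b x).differentiableAt
  · exact (hasDerivAt_monomialTerm_update_two c a b x hh.differentiableAt).differentiableAt

end monomialTerm

/-- The third derivatives of `v₀²v₂/2 + v₀v₁²/2 + f(v₁, v₂)`, with `a, b, c, d` standing for
`f₁₁₁, f₁₁₂, f₁₂₂, f₂₂₂`. -/
def frobeniusTensor (a b c d : ℝ) : Fin 3 → Fin 3 → Fin 3 → ℝ :=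
  ![![![0, 0, 1], ![0, 1, 0], ![1, 0, 0]],
    ![![0, 1, 0], ![1, a, b], ![0, b, c]],
    ![![1, 0, 0], ![0, b, c], ![0, c, d]]]

theorem wdvv_frobeniusTensor {a b c d : ℝ} (h : d = b ^ 2 - a * c) (α β γ δ : Fin 3) :
    ∑ ρ : Fin 3, ∑ σ : Fin 3, frobeniusTensor a b c d α β ρ *
        ![![0, 0, 1], ![0, 1, 0], ![1, 0, 0]] ρ σ * frobeniusTensor a b c d σ γ δ =
      ∑ ρ : Fin 3, ∑ σ : Fin 3, frobeniusTensor a b c d δ β ρ *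
        ![![0, 0, 1], ![0, 1, 0], ![1, 0, 0]] ρ σ * frobeniusTensor a b c d σ γ α := by
  subst h
  fin_cases α <;> fin_cases β <;> fin_cases γ <;> fin_cases δ <;>
    simp only [Fin.sum_univ_three, frobeniusTensor, Fin.isValue, Fin.zero_eta, Fin.mk_one,
      Fin.reduceFinMk, Matrix.cons_val, Matrix.cons_val', Matrix.cons_val_zero, Matrix.cons_val_one,
      Matrix.cons_val_fin_one] <;> ring

noncomputable def chazyPotential (γ : ℝ → ℝ) : (Fin 3 → ℝ) → ℝ :=
  monomialTerm (1/2) 2 0 id + monomialTerm (1/2) 1 2 (fun _ => 1) + monomialTerm (-1/16) 0 4 γ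

theorem pd_pd_pd_chazyPotential {γ : ℝ → ℝ} (h1 : Differentiable ℝ γ)
    (h2 : Differentiable ℝ (deriv γ)) (h3 : Differentiable ℝ (deriv (deriv γ)))
    (x : Fin 3 → ℝ) (i j k : Fin 3) :
    pd i (pd j (pd k (chazyPotential γ))) x =
      frobeniusTensor (-(3/2) * x 1 * γ (x 2)) (-(3/4) * x 1 ^ 2 * deriv γ (x 2))
        (-(1/4) * x 1 ^ 3 * deriv (deriv γ) (x 2))
        (-(1/16) * x 1 ^ 4 * deriv (deriv (deriv γ)) (x 2)) i j k := by
  -- the side conditions of `pd_add` nest: sum, summand, differentiability of `h`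
  fin_cases i <;> fin_cases j <;> fin_cases k <;>
    simp (maxDischargeDepth := 4) only [chazyPotential, pd_add, pd_zero_monomialTerm,
      pd_one_monomialTerm, pd_two_monomialTerm, DifferentiableAlong.add,
      differentiableAlong_monomialTerm, differentiable_id, differentiable_const, h1, h2, h3,
      deriv_id', deriv_const', Pi.add_apply, monomialTerm, frobeniusTensor, Fin.isValue,
      Fin.zero_eta, Fin.mk_one, Fin.reduceFinMk, Matrix.cons_val, Matrix.cons_val',
      Matrix.cons_val_zero, Matrix.cons_val_one, Matrix.cons_val_fin_one, Nat.reduceSub, id_eq] <;>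
    ring

theorem chazy_implies_wdvv (γ : ℝ → ℝ)
    (hd1 : Differentiable ℝ γ)
    (hd2 : Differentiable ℝ (deriv γ))
    (hd3 : Differentiable ℝ (deriv (deriv γ)))
    (hChazy : ∀ x : ℝ, deriv (deriv (deriv γ)) x
      = 6 * γ x * deriv (deriv γ) x - 9 * (deriv γ x)^2) :
    let F : (Fin 3 → ℝ) → ℝ := fun v =>
      (1/2) * (v 0)^2 * (v 2) + (1/2) * (v 0) * (v 1)^2 - ((v 1)^4 / 16) * γ (v 2)
    let η : Fin 3 → Fin 3 → ℝ := ![![0,0,1], ![0,1,0], ![1,0,0]]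
    ∀ (x : Fin 3 → ℝ) (α β γ' δ : Fin 3),
      ∑ ρ : Fin 3, ∑ σ : Fin 3,
          pd α (pd β (pd ρ F)) x * η ρ σ * pd σ (pd γ' (pd δ F)) x
        = ∑ ρ : Fin 3, ∑ σ : Fin 3,
          pd δ (pd β (pd ρ F)) x * η ρ σ * pd σ (pd γ' (pd α F)) x := by
  intro F η x α β γ' δ
  have hF : F = chazyPotential γ := by
    funext v
    simp only [F, chazyPotential, monomialTerm, Pi.add_apply, id]
    ring
  simp only [hF, pd_pd_pd_chazyPotential hd1 hd2 hd3]
  exact wdvv_frobeniusTensor (by rw [hChazy]; ring) α β γ' δ
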